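/- arXiv:0704.3052 — 4 statements merged into one kernel-verified Lean document; each statement's English description precedes it below -/
import Mathlib

section
/- Let f be analytic on an open set R ⊆ ℂ, let A ⊆ ℝ be an interval, let B ⊆ {z ∈ R : f(z)·f'(z) ≠ 0}, and let p : A → B be a differentiable function satisfying the differential equation p'(s) = |f'(p(s))·conj(f(p(s)))|·i / (f'(p(s))·conj(f(p(s)))) for all s ∈ A, with p(s₀) = z₀ for some s₀ ∈ A (where f(z₀) ≠ 0 and f'(z₀) ≠ 0). Then |f(z)| = |f(z₀)| for every z in the image p(A). -/
open Complex
open scoped ComplexConjugate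

/-!
Along a level path, `(f ∘ p)' = f'(p) p'` is `i` times a positive multiple of `f(p)`
(or `0`), so it is orthogonal to `f(p)`: the derivative `2 Re(conj (f ∘ p) · (f ∘ p)')` of
`|f ∘ p|²` vanishes, and on the interval `A` this forces `|f ∘ p|` to be constant.
-/

theorem Convex.eq_of_hasDerivWithinAt_zero {E : Type*} [NormedAddCommGroup E] [NormedSpace ℝ E]
    {g : ℝ → E} {A : Set ℝ} (hA : Convex ℝ A) (hg : ∀ s ∈ A, HasDerivWithinAt g 0 A s)
    {a b : ℝ} (ha : a ∈ A) (hb : b ∈ A) : g b = g a := by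
  have h :=
    hA.norm_image_sub_le_of_norm_hasDerivWithin_le (C := 0) hg (fun _ _ => by simp) ha hb
  simpa [sub_eq_zero] using h

theorem Complex.re_mul_norm_mul_I_div_self (w : ℂ) : (w * (‖w‖ * I / w)).re = 0 := by
  rcases eq_or_ne w 0 with rfl | hw
  · simp
  · rw [mul_div_cancel₀ _ hw]
    simp

theorem hasDerivWithinAt_norm_sq_comp_levelPath {f : ℂ → ℂ} {p : ℝ → ℂ} {A : Set ℝ}
    {s : ℝ} (hf : DifferentiableAt ℂ f (p s))
    (hp : HasDerivWithinAt p (‖deriv f (p s) * conj (f (p s))‖ * I /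
      (deriv f (p s) * conj (f (p s)))) A s) :
    HasDerivWithinAt (fun t => ‖f (p t)‖ ^ 2) 0 A s := by
  have h := (hf.hasDerivAt.comp_hasDerivWithinAt s hp).norm_sq
  rwa [Complex.inner, Function.comp_apply, mul_right_comm, re_mul_norm_mul_I_div_self,
    mul_zero] at h

theorem level_path_constant_modulus_general
    (f : ℂ → ℂ) (R : Set ℂ) (hf : AnalyticOnNhd ℂ f R)
    (A : Set ℝ) (hA : A.OrdConnected)
    (B : Set ℂ) (hB : B ⊆ {z ∈ R | f z * deriv f z ≠ 0})
    (p p' : ℝ → ℂ)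
    (hmaps : ∀ s ∈ A, p s ∈ B)
    (hdiff : ∀ s ∈ A, HasDerivWithinAt p (p' s) A s)
    (hde : ∀ s ∈ A, p' s =
      ((‖deriv f (p s) * (starRingEnd ℂ) (f (p s))‖ : ℝ) : ℂ) * Complex.I /
        (deriv f (p s) * (starRingEnd ℂ) (f (p s))))
    (s₀ : ℝ) (hs₀ : s₀ ∈ A) (z₀ : ℂ) (hz₀ : p s₀ = z₀) :
    ∀ z ∈ p '' A, ‖f z‖ = ‖f z₀‖ := by
  rintro z ⟨s, hs, rfl⟩
  subst hz₀
  have hderiv : ∀ t ∈ A, HasDerivWithinAt (fun t => ‖f (p t)‖ ^ 2) 0 A t := fun t ht =>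
    hasDerivWithinAt_norm_sq_comp_levelPath (hf _ (hB (hmaps t ht)).1).differentiableAt
      (hde t ht ▸ hdiff t ht)
  have hsq : ‖f (p s)‖ ^ 2 = ‖f (p s₀)‖ ^ 2 :=
    hA.convex.eq_of_hasDerivWithinAt_zero hderiv hs₀ hs
  exact (pow_left_inj₀ (norm_nonneg _) (norm_nonneg _) two_ne_zero).mp hsq

/-- **Proposition 1 (level set property).** If `f` is analytic on an open set `R`,
`A ⊆ ℝ` is an interval, `B ⊆ {z ∈ R : f z * f' z ≠ 0}`, and `p : A → B` is differentiable
with `p'(s) = |f'(p s) * conj (f (p s))| * I / (f'(p s) * conj (f (p s)))` on `A` and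
`p s₀ = z₀` for some `s₀ ∈ A` (where `f z₀ ≠ 0` and `f' z₀ ≠ 0`), then
`|f z| = |f z₀|` for every `z ∈ p '' A`. -/
theorem level_path_constant_modulus
    (f : ℂ → ℂ) (R : Set ℂ) (hR : IsOpen R) (hf : AnalyticOnNhd ℂ f R)
    (A : Set ℝ) (hA : A.OrdConnected)
    (B : Set ℂ) (hB : B ⊆ {z ∈ R | f z * deriv f z ≠ 0})
    (p p' : ℝ → ℂ)
    (hmaps : ∀ s ∈ A, p s ∈ B)
    (hdiff : ∀ s ∈ A, HasDerivWithinAt p (p' s) A s)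
    (hde : ∀ s ∈ A, p' s =
      ((‖deriv f (p s) * (starRingEnd ℂ) (f (p s))‖ : ℝ) : ℂ) * Complex.I /
        (deriv f (p s) * (starRingEnd ℂ) (f (p s))))
    (s₀ : ℝ) (hs₀ : s₀ ∈ A) (z₀ : ℂ) (hz₀ : p s₀ = z₀)
    (hfz₀ : f z₀ ≠ 0) (hfz₀' : deriv f z₀ ≠ 0) :
    ∀ z ∈ p '' A, ‖f z‖ = ‖f z₀‖ :=
  level_path_constant_modulus_general f R hf A hA B hB p p' hmaps hdiff hde s₀ hs₀ z₀ hz₀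
end

section
/- Let f be analytic on an open set R ⊆ ℂ, let A ⊆ ℝ be an interval, and let p : A → ℂ be a differentiable function taking values in {z ∈ R : f(z)·f'(z) ≠ 0} and satisfying p'(s) = |f'(p(s))·conj(f(p(s)))|·i / (f'(p(s))·conj(f(p(s)))) for all s ∈ A. Then the derivative with respect to s of the function s ↦ f(p(s))·conj(f(p(s))) = |f(p(s))|² is identically zero on A. -/
open Complex ComplexConjugate

/-! Along `p`, the derivative of `f ∘ p` times `conj (f ∘ p)` is `w * p'` with
`w = f'(p) * conj (f (p))`, and the differential equation makes this `‖w‖ * I`, which is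
purely imaginary. The derivative of `|f ∘ p|²` is twice its real part, hence zero. -/

theorem HasDerivWithinAt.mul_conj {g : ℝ → ℂ} {g' : ℂ} {A : Set ℝ} {s : ℝ}
    (hg : HasDerivWithinAt g g' A s) :
    HasDerivWithinAt (fun t => g t * conj (g t)) ((2 * (g' * conj (g s)).re : ℝ) : ℂ) A s := by
  refine (hg.mul hg.star).congr_deriv ?_
  rw [← add_conj, map_mul, conj_conj, mul_comm (g s)]
  rfl

theorem Complex.re_mul_ofReal_mul_I_div_self (w : ℂ) (r : ℝ) : (w * (r * I / w)).re = 0 := by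
  rcases eq_or_ne w 0 with rfl | hw
  · simp
  · simp [mul_div_cancel₀ _ hw]

theorem level_path_modulus_sq_deriv_zero_general
    (f : ℂ → ℂ) (R : Set ℂ) (hf : AnalyticOnNhd ℂ f R)
    (A : Set ℝ)
    (p p' : ℝ → ℂ)
    (hmaps : ∀ s ∈ A, p s ∈ {z ∈ R | f z * deriv f z ≠ 0})
    (hdiff : ∀ s ∈ A, HasDerivWithinAt p (p' s) A s)
    (hde : ∀ s ∈ A, p' s =
      (‖deriv f (p s) * (starRingEnd ℂ) (f (p s))‖ : ℂ) * Complex.I /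
        (deriv f (p s) * (starRingEnd ℂ) (f (p s)))) :
    ∀ s ∈ A, HasDerivWithinAt (fun t => f (p t) * (starRingEnd ℂ) (f (p t))) 0 A s := by
  intro s hs
  obtain ⟨hpR, -⟩ := hmaps s hs
  have hfp : HasDerivWithinAt (fun t => f (p t)) (deriv f (p s) * p' s) A s :=
    (hf _ hpR).differentiableAt.hasDerivAt.comp_hasDerivWithinAt s (hdiff s hs)
  have h := hfp.mul_conj
  rwa [mul_right_comm, hde s hs, re_mul_ofReal_mul_I_div_self, mul_zero, ofReal_zero] at h

/-- Along a level path `p` of an analytic function `f`, the derivative of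
`s ↦ f (p s) * conj (f (p s)) = |f (p s)|²` vanishes identically. -/
theorem level_path_modulus_sq_deriv_zero
    (f : ℂ → ℂ) (R : Set ℂ) (hR : IsOpen R) (hf : AnalyticOnNhd ℂ f R)
    (A : Set ℝ) (hA : A.OrdConnected)
    (p p' : ℝ → ℂ)
    (hmaps : ∀ s ∈ A, p s ∈ {z ∈ R | f z * deriv f z ≠ 0})
    (hdiff : ∀ s ∈ A, HasDerivWithinAt p (p' s) A s)
    (hde : ∀ s ∈ A, p' s =
      (‖deriv f (p s) * (starRingEnd ℂ) (f (p s))‖ : ℂ) * Complex.I /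
        (deriv f (p s) * (starRingEnd ℂ) (f (p s)))) :
    ∀ s ∈ A, HasDerivWithinAt (fun t => f (p t) * (starRingEnd ℂ) (f (p t))) 0 A s :=
  level_path_modulus_sq_deriv_zero_general f R hf A p p' hmaps hdiff hde
end

section
/- Let f be analytic on an open set R ⊆ ℂ, let A ⊆ ℝ be an interval, let B ⊆ {z ∈ R : f(z)·f'(z) ≠ 0}, and let p : A → B be a differentiable function satisfying the oppositely oriented differential equation p'(s) = −|f'(p(s))·conj(f(p(s)))|·i / (f'(p(s))·conj(f(p(s)))) for all s ∈ A, with p(s₀) = z₀ for some s₀ ∈ A (where f(z₀) ≠ 0 and f'(z₀) ≠ 0). Then |f(z)| = |f(z₀)| for every z ∈ p(A), and |p'(s)| = 1 for all s ∈ A. -/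
open Complex

/-!
Along a solution, `(f ∘ p)' = f'(p) p'`, so `conj (f ∘ p) · (f ∘ p)' = a p'` with
`a = f'(p) conj (f (p))`, and the equation says `a p' = -|a| i`, which is purely imaginary.
Hence `d/ds |f (p s)|² = 2 Re (conj (f (p s)) (f ∘ p)'(s)) = 0`, so `|f ∘ p|` is constant on the
interval `A`; and `|p'| = |a| / |a| = 1`.
-/

theorem norm_neg_norm_mul_I_div_self {a : ℂ} (ha : a ≠ 0) : ‖-((‖a‖ : ℂ) * I / a)‖ = 1 := by
  rw [norm_neg, norm_div, norm_mul, norm_I, norm_real, norm_norm, mul_one,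
    div_self (norm_ne_zero_iff.mpr ha)]

theorem re_mul_neg_norm_mul_I_div_self (a : ℂ) : (a * -((‖a‖ : ℂ) * I / a)).re = 0 := by
  rcases eq_or_ne a 0 with rfl | ha
  · simp
  · rw [mul_neg, mul_div_cancel₀ _ ha]
    simp

theorem Convex.norm_eq_of_hasDerivWithinAt_of_inner_eq_zero {F : Type*}
    [NormedAddCommGroup F] [InnerProductSpace ℝ F] {A : Set ℝ} (hA : Convex ℝ A)
    {g g' : ℝ → F} (hg : ∀ s ∈ A, HasDerivWithinAt g (g' s) A s)
    (horth : ∀ s ∈ A, inner ℝ (g s) (g' s) = 0) {s₀ s : ℝ} (hs₀ : s₀ ∈ A) (hs : s ∈ A) :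
    ‖g s‖ = ‖g s₀‖ := by
  have hderiv : ∀ t ∈ A, HasDerivWithinAt (‖g ·‖ ^ 2) 0 A t := fun t ht => by
    simpa [horth t ht] using (hg t ht).norm_sq
  have hsq := hA.norm_image_sub_le_of_norm_hasDerivWithin_le (C := 0) hderiv
    (fun _ _ => by simp) hs₀ hs
  rw [zero_mul, norm_le_zero_iff, sub_eq_zero] at hsq
  exact (sq_eq_sq₀ (norm_nonneg _) (norm_nonneg _)).mp hsq

theorem level_path_opposite_orientation_general
    (f : ℂ → ℂ) (R : Set ℂ) (hf : AnalyticOnNhd ℂ f R)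
    (A : Set ℝ) (hA : A.OrdConnected)
    (B : Set ℂ) (hB : B ⊆ {z ∈ R | f z * deriv f z ≠ 0})
    (p p' : ℝ → ℂ)
    (hmaps : ∀ s ∈ A, p s ∈ B)
    (hdiff : ∀ s ∈ A, HasDerivWithinAt p (p' s) A s)
    (hde : ∀ s ∈ A, p' s =
      -(((‖deriv f (p s) * (starRingEnd ℂ) (f (p s))‖ : ℝ) : ℂ) * Complex.I /
        (deriv f (p s) * (starRingEnd ℂ) (f (p s)))))
    (s₀ : ℝ) (hs₀ : s₀ ∈ A) (z₀ : ℂ) (hz₀ : p s₀ = z₀) :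
    (∀ z ∈ p '' A, ‖f z‖ = ‖f z₀‖) ∧
      (∀ s ∈ A, ‖p' s‖ = 1) := by
  have hfp : ∀ s ∈ A, HasDerivWithinAt (f ∘ p) (deriv f (p s) * p' s) A s := fun s hs =>
    ((hf _ (hB (hmaps s hs)).1).differentiableAt.hasDerivAt).comp_hasDerivWithinAt s (hdiff s hs)
  have horth : ∀ s ∈ A, inner ℝ (f (p s)) (deriv f (p s) * p' s) = 0 := fun s hs => by
    rw [Complex.inner, mul_right_comm, hde s hs]
    exact re_mul_neg_norm_mul_I_div_self _
  refine ⟨?_, fun s hs => ?_⟩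
  · rintro _ ⟨s, hs, rfl⟩
    rw [← hz₀]
    exact hA.convex.norm_eq_of_hasDerivWithinAt_of_inner_eq_zero hfp horth hs₀ hs
  · have hne := (hB (hmaps s hs)).2
    rw [hde s hs]
    exact norm_neg_norm_mul_I_div_self
      (mul_ne_zero (right_ne_zero_of_mul hne) ((map_ne_zero _).mpr (left_ne_zero_of_mul hne)))

/-- **Opposite orientation variant.** If `p` satisfies the oppositely oriented level-path
differential equation
`p'(s) = -|f'(p s) * conj (f (p s))| * I / (f'(p s) * conj (f (p s)))` on an interval `A`
with `p s₀ = z₀`, then `|f z| = |f z₀|` on `p '' A` and `|p'(s)| = 1` on `A`. -/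
theorem level_path_opposite_orientation
    (f : ℂ → ℂ) (R : Set ℂ) (hR : IsOpen R) (hf : AnalyticOnNhd ℂ f R)
    (A : Set ℝ) (hA : A.OrdConnected)
    (B : Set ℂ) (hB : B ⊆ {z ∈ R | f z * deriv f z ≠ 0})
    (p p' : ℝ → ℂ)
    (hmaps : ∀ s ∈ A, p s ∈ B)
    (hdiff : ∀ s ∈ A, HasDerivWithinAt p (p' s) A s)
    (hde : ∀ s ∈ A, p' s =
      -(((‖deriv f (p s) * (starRingEnd ℂ) (f (p s))‖ : ℝ) : ℂ) * Complex.I /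
        (deriv f (p s) * (starRingEnd ℂ) (f (p s)))))
    (s₀ : ℝ) (hs₀ : s₀ ∈ A) (z₀ : ℂ) (hz₀ : p s₀ = z₀)
    (hfz₀ : f z₀ ≠ 0) (hfz₀' : deriv f z₀ ≠ 0) :
    (∀ z ∈ p '' A, ‖f z‖ = ‖f z₀‖) ∧
      (∀ s ∈ A, ‖p' s‖ = 1) :=
  level_path_opposite_orientation_general f R hf A hA B hB p p' hmaps hdiff hde s₀ hs₀ z₀ hz₀
end

section
/- Let a, b, z₀ ∈ ℂ with a ≠ 0 and z₀ ≠ −b/a, and let s₀ ∈ ℝ. Define p : ℝ → ℂ by p(s) = (z₀ + b/a)·exp(i·(s − s₀)/|z₀ + b/a|) − b/a. Then p is differentiable, p(s₀) = z₀, and p satisfies the level-path differential equation for f(z) = a·z + b, namely p'(s) = |a·conj(a·p(s) + b)|·i / (a·conj(a·p(s) + b)) for all s ∈ ℝ. -/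
/-!
With `w = z₀ + b/a`, the point `a * p s + b = a * v s`, where `v s = w * exp (i (s - s₀) / |w|)`
runs along the circle of radius `|w|` at unit speed, so `v' = i v / |v|`. Since
`a * conj (a * v) = |a|² conj v`, the right-hand side of the level-path equation is
`|v| i / conj v = i v / |v|` as well.
-/

open Complex ComplexConjugate

noncomputable def levelPathVelocity (d w : ℂ) : ℂ := ‖d * conj w‖ * I / (d * conj w)

theorem Complex.div_norm_eq_norm_div_conj (z : ℂ) : z / ‖z‖ = ‖z‖ / conj z := by
  rcases eq_or_ne z 0 with rfl | hz
  · simp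
  have hz' : conj z ≠ 0 := (map_ne_zero _).mpr hz
  have hn : (‖z‖ : ℂ) ≠ 0 := by exact_mod_cast norm_ne_zero_iff.mpr hz
  rw [div_eq_div_iff hn hz', mul_conj, normSq_eq_norm_sq]
  push_cast
  ring

theorem levelPathVelocity_mul_left {a : ℂ} (ha : a ≠ 0) (v : ℂ) :
    levelPathVelocity a (a * v) = I * (v / ‖v‖) := by
  have hmul : a * conj (a * v) = normSq a * conj v := by
    rw [map_mul, ← mul_assoc, mul_conj]
  have ha' : (normSq a : ℂ) ≠ 0 := by exact_mod_cast normSq_pos.mpr ha |>.ne'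
  rw [levelPathVelocity, hmul, norm_mul, norm_conj, norm_real, Real.norm_of_nonneg (normSq_nonneg a),
    div_norm_eq_norm_div_conj]
  push_cast
  rw [mul_assoc, mul_div_mul_left _ _ ha']
  ring

theorem hasDerivAt_mul_exp_I_mul_sub_div (w : ℂ) (s₀ r s : ℝ) :
    HasDerivAt (fun s : ℝ => w * exp (I * (s - s₀) / r))
      (I * (w * exp (I * (s - s₀) / r)) / r) s := by
  have harg : HasDerivAt (fun s : ℝ => I * ((s : ℂ) - s₀) / r) (I / r) s := by
    simpa using ((((hasDerivAt_id s).ofReal_comp).sub_const (s₀ : ℂ)).const_mul I).div_const (r : ℂ)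
  exact (harg.cexp.const_mul w).congr_deriv (by ring)

theorem norm_mul_exp_I_mul_sub_div (w : ℂ) (s₀ r s : ℝ) :
    ‖w * exp (I * (s - s₀) / r)‖ = ‖w‖ := by
  have : I * ((s : ℂ) - s₀) / r = ((s - s₀) / r : ℝ) * I := by
    push_cast
    ring
  rw [norm_mul, this, norm_exp_ofReal_mul_I, mul_one]

theorem affine_level_path_solution_general
    (a b z₀ : ℂ) (ha : a ≠ 0) (s₀ : ℝ)
    (p : ℝ → ℂ)
    (hp : ∀ s : ℝ, p s =
      (z₀ + b / a) * Complex.exp (Complex.I * ((s : ℂ) - (s₀ : ℂ)) /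
        ((‖z₀ + b / a‖ : ℝ) : ℂ)) - b / a) :
    Differentiable ℝ p ∧ p s₀ = z₀ ∧
      ∀ s : ℝ, deriv p s =
        ((‖a * (starRingEnd ℂ) (a * p s + b)‖ : ℝ) : ℂ) * Complex.I /
          (a * (starRingEnd ℂ) (a * p s + b)) := by
  set w := z₀ + b / a
  set v : ℝ → ℂ := fun s => w * exp (I * (s - s₀) / ‖w‖)
  have hpv : p = fun s => v s - b / a := funext hp
  have hderiv (s : ℝ) : HasDerivAt p (I * (v s / ‖v s‖)) s := by
    rw [hpv, norm_mul_exp_I_mul_sub_div, ← mul_div_assoc]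
    exact (hasDerivAt_mul_exp_I_mul_sub_div w s₀ ‖w‖ s).sub_const (b / a)
  refine ⟨fun s => (hderiv s).differentiableAt, by simp [hp, w], fun s => ?_⟩
  have hav : a * p s + b = a * v s := by
    rw [hp]
    field_simp
    ring
  rw [(hderiv s).deriv, hav, ← levelPathVelocity_mul_left ha]
  rfl

/-- **Example (affine case), existence.** For `f z = a * z + b` with `a ≠ 0` and
`z₀ ≠ -b / a`, the function
`p s = (z₀ + b / a) * exp (I * (s - s₀) / |z₀ + b / a|) - b / a`
is differentiable, satisfies `p s₀ = z₀`, and solves the level-path differential equation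
`p'(s) = |a * conj (a * p s + b)| * I / (a * conj (a * p s + b))` for all `s ∈ ℝ`. -/
theorem affine_level_path_solution
    (a b z₀ : ℂ) (ha : a ≠ 0) (hz₀ : z₀ ≠ -b / a) (s₀ : ℝ)
    (p : ℝ → ℂ)
    (hp : ∀ s : ℝ, p s =
      (z₀ + b / a) * Complex.exp (Complex.I * ((s : ℂ) - (s₀ : ℂ)) /
        ((‖z₀ + b / a‖ : ℝ) : ℂ)) - b / a) :
    Differentiable ℝ p ∧ p s₀ = z₀ ∧
      ∀ s : ℝ, deriv p s =
        ((‖a * (starRingEnd ℂ) (a * p s + b)‖ : ℝ) : ℂ) * Complex.I /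
          (a * (starRingEnd ℂ) (a * p s + b)) :=
  affine_level_path_solution_general a b z₀ ha s₀ p hp
end
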